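/- arXiv:2012.15193 — 6 statements merged into one kernel-verified Lean document; each statement's English description precedes it below -/
import Mathlib

section
/- The domination polynomial of the complete bipartite graph K_{k,ℓ} is D(K_{k,ℓ}, x) = ((1+x)^k - 1)((1+x)^ℓ - 1) + x^k + x^ℓ. -/
/-!
Write a vertex set of `K_{α,β}` as `A ⊔ B` with `A ⊆ α`, `B ⊆ β`. Every vertex of one side is
adjacent to every vertex of the other, so `A ⊔ B` dominates iff both `A` and `B` are nonempty, or
one of them is a whole side and the other is empty. Summing `x ^ (#A + #B)` over the first family
gives `((1 + x) ^ k - 1) * ((1 + x) ^ l - 1)`; the other two contribute `x ^ k` and `x ^ l`.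
-/

open Finset

open scoped Classical in
noncomputable def domPoly {V : Type*} [Fintype V] (G : SimpleGraph V) (x : ℝ) : ℝ :=
  ∑ S ∈ Finset.univ.powerset.filter
      (fun S : Finset V => ∀ v : V, v ∈ S ∨ ∃ u ∈ S, G.Adj u v), x ^ S.card

section
variable {R ι : Type*} [CommRing R] [Fintype ι]

lemma Fintype.sum_finset_pow_card (x : R) :
    ∑ s : Finset ι, x ^ #s = (1 + x) ^ Fintype.card ι := by
  simpa [add_comm] using Fintype.sum_pow_mul_eq_add_pow ι x 1

lemma Fintype.sum_nonempty_finset_pow_card (x : R) :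
    ∑ s : Finset ι, (if s.Nonempty then x ^ #s else 0) = (1 + x) ^ Fintype.card ι - 1 := by
  classical
  rw [← Fintype.sum_finset_pow_card, ← sum_erase_add _ _ (mem_univ ∅), ← sum_filter]
  simp [filter_ne', nonempty_iff_ne_empty]

end

namespace SimpleGraph
variable {V α β : Type*}

def IsDominatingSet (G : SimpleGraph V) (S : Finset V) : Prop :=
  ∀ v, v ∈ S ∨ ∃ u ∈ S, G.Adj u v

lemma isDominatingSet_completeBipartiteGraph_disjSum_iff [Fintype α] [Fintype β]
    (A : Finset α) (B : Finset β) :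
    (completeBipartiteGraph α β).IsDominatingSet (A.disjSum B) ↔
      (A = univ ∨ B.Nonempty) ∧ (B = univ ∨ A.Nonempty) := by
  simp only [IsDominatingSet, Sum.forall, Sum.exists, mem_disjSum, eq_univ_iff_forall]
  simp [Finset.Nonempty, forall_or_right]

lemma isDominatingSet_completeBipartiteGraph_disjSum_iff_of_nonempty [Fintype α] [Fintype β]
    [Nonempty α] [Nonempty β] (A : Finset α) (B : Finset β) :
    (completeBipartiteGraph α β).IsDominatingSet (A.disjSum B) ↔
      A.Nonempty ∧ B.Nonempty ∨ A = univ ∧ B = ∅ ∨ A = ∅ ∧ B = univ := by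
  rw [isDominatingSet_completeBipartiteGraph_disjSum_iff]
  by_cases hA : A = ∅ <;> by_cases hB : B = ∅ <;>
    simp [hA, hB, nonempty_iff_ne_empty, univ_nonempty.ne_empty.symm]

end SimpleGraph

open SimpleGraph

open scoped Classical in
lemma domPoly_eq_sum {V : Type*} [Fintype V] (G : SimpleGraph V) (x : ℝ) :
    domPoly G x = ∑ S : Finset V, if G.IsDominatingSet S then x ^ #S else 0 := by
  rw [domPoly, powerset_univ, sum_filter]
  congr! 2

lemma domPoly_completeBipartiteGraph {α β : Type*} [Fintype α] [Fintype β] [Nonempty α]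
    [Nonempty β] (x : ℝ) :
    domPoly (completeBipartiteGraph α β) x =
      ((1 + x) ^ Fintype.card α - 1) * ((1 + x) ^ Fintype.card β - 1)
        + x ^ Fintype.card α + x ^ Fintype.card β := by
  classical
  -- the three cases of the characterisation of dominating sets are mutually exclusive
  have hsplit (A : Finset α) (B : Finset β) :
      (if A.Nonempty ∧ B.Nonempty ∨ A = univ ∧ B = ∅ ∨ A = ∅ ∧ B = univ
        then x ^ (#A + #B) else 0) =
      (if A.Nonempty then x ^ #A else 0) * (if B.Nonempty then x ^ #B else 0)
        + (if A = univ ∧ B = ∅ then x ^ #A else 0) + (if A = ∅ ∧ B = univ then x ^ #B else 0) := by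
    split_ifs <;> simp_all [pow_add, univ_nonempty.ne_empty, univ_nonempty.ne_empty.symm,
      nonempty_iff_ne_empty]
  rw [domPoly_eq_sum, ← sumEquiv.symm.toEquiv.sum_comp, Fintype.sum_prod_type]
  simp only [OrderIso.coe_toEquiv, sumEquiv_symm_apply, card_disjSum,
    isDominatingSet_completeBipartiteGraph_disjSum_iff_of_nonempty, hsplit, sum_add_distrib,
    ← sum_mul_sum, Fintype.sum_nonempty_finset_pow_card, ite_and]
  simp

theorem domPoly_completeBipartite (k l : ℕ) (hk : 1 ≤ k) (hl : 1 ≤ l) (x : ℝ) :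
    domPoly (completeBipartiteGraph (Fin k) (Fin l)) x =
      ((1 + x) ^ k - 1) * ((1 + x) ^ l - 1) + x ^ k + x ^ l := by
  have : Nonempty (Fin k) := ⟨⟨0, hk⟩⟩
  have : Nonempty (Fin l) := ⟨⟨0, hl⟩⟩
  simpa using domPoly_completeBipartiteGraph (α := Fin k) (β := Fin l) x
end

section
/- For every δ ∈ (0,1), for each sufficiently large odd ℓ the polynomial f_ℓ(x) = (1+x)^ℓ(x^2+2x) + x^ℓ - 2x has a real root in the open interval (-1-δ, -1). -/
/-!
At `x = -1` the first term vanishes, so `f_ℓ(-1) = (-1)^ℓ + 2 = 1` for odd `ℓ`.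
At `x = -1 - δ` oddness gives `f_ℓ(-1 - δ) = δ^ℓ (1 - δ²) + 2(1 + δ) - (1 + δ)^ℓ`, where
the first summand is at most `1`, so the exponential term `(1 + δ)^ℓ` makes the value negative
for large `ℓ`. The intermediate value theorem then gives a root in between.
-/

open Filter

/-- The domination polynomial of the complete bipartite graph `K_{2,ℓ}`. -/
noncomputable def domPolyK2 (l : ℕ) (x : ℝ) : ℝ :=
  (1 + x) ^ l * (x ^ 2 + 2 * x) + x ^ l - 2 * x

lemma continuous_domPolyK2 (l : ℕ) : Continuous (domPolyK2 l) := by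
  unfold domPolyK2
  fun_prop

lemma domPolyK2_neg_one {l : ℕ} (hl : Odd l) : domPolyK2 l (-1) = 1 := by
  rw [domPolyK2, add_neg_cancel, zero_pow hl.pos.ne', hl.neg_one_pow]
  ring

lemma domPolyK2_neg_one_sub {l : ℕ} (hl : Odd l) (δ : ℝ) :
    domPolyK2 l (-1 - δ) = δ ^ l * (1 - δ ^ 2) + 2 * (1 + δ) - (1 + δ) ^ l := by
  rw [domPolyK2, show 1 + (-1 - δ) = -δ by ring, show -1 - δ = -(1 + δ) by ring,
    hl.neg_pow, hl.neg_pow]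
  ring

lemma pow_mul_one_sub_sq_le_one {δ : ℝ} (hδ : 0 ≤ δ) (l : ℕ) : δ ^ l * (1 - δ ^ 2) ≤ 1 := by
  rcases le_total δ 1 with hle | hge
  · have hsq : 1 - δ ^ 2 ≤ 1 := by nlinarith
    exact mul_le_one₀ (pow_le_one₀ hδ hle) (by nlinarith) hsq
  · exact (mul_nonpos_of_nonneg_of_nonpos (pow_nonneg hδ l) (by nlinarith)).trans zero_le_one

lemma eventually_domPolyK2_neg_one_sub_neg {δ : ℝ} (hδ : 0 < δ) :
    ∀ᶠ l in atTop, Odd l → domPolyK2 l (-1 - δ) < 0 := by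
  have hgrow : ∀ᶠ l in atTop, 3 + 2 * δ < (1 + δ) ^ l :=
    (tendsto_pow_atTop_atTop_of_one_lt (by linarith)).eventually_gt_atTop _
  filter_upwards [hgrow] with l hl hodd
  rw [domPolyK2_neg_one_sub hodd]
  linarith [pow_mul_one_sub_sq_le_one hδ.le l]

theorem K2l_root_in_interval_general (δ : ℝ) (h0 : 0 < δ) :
    ∃ N : ℕ, ∀ l ≥ N, Odd l →
      ∃ x : ℝ, -1 - δ < x ∧ x < -1 ∧
        (1 + x) ^ l * (x ^ 2 + 2 * x) + x ^ l - 2 * x = 0 := by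
  obtain ⟨N, hN⟩ := eventually_atTop.1 (eventually_domPolyK2_neg_one_sub_neg h0)
  refine ⟨N, fun l hl hodd => ?_⟩
  have hsign : (0 : ℝ) ∈ Set.Ioo (domPolyK2 l (-1 - δ)) (domPolyK2 l (-1)) := by
    rw [domPolyK2_neg_one hodd]
    exact ⟨hN l hl hodd, one_pos⟩
  obtain ⟨x, hx, hroot⟩ := intermediate_value_Ioo (by linarith)
    (continuous_domPolyK2 l).continuousOn hsign
  exact ⟨x, hx.1, hx.2, hroot⟩

theorem K2l_root_in_interval (δ : ℝ) (h0 : 0 < δ) (h1 : δ < 1) :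
    ∃ N : ℕ, ∀ l ≥ N, Odd l →
      ∃ x : ℝ, -1 - δ < x ∧ x < -1 ∧
        (1 + x) ^ l * (x ^ 2 + 2 * x) + x ^ l - 2 * x = 0 :=
  K2l_root_in_interval_general δ h0
end

section
/- For every δ ∈ (0,1) and every sufficiently large odd k, the polynomial g_k(x) = (1+x)^{2k} - 2(1+x)^k + 2x^k + 1 has a real root in the open interval (-1, -1+δ). -/
/-!
For odd `k`, `g_k(-1) = -1`, while for fixed `a ∈ (0, 1)`,
`g_k(-1 + a) = (1 - a^k)^2 - 2 (1 - a)^k ≥ 1 - 2 a^k - 2 (1 - a)^k`, which tends to `1`. So for large odd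
`k` the intermediate value theorem gives a root in `(-1, -1 + a)`; take `a = δ / 2`.
-/

open Filter Set

/-- The domination polynomial `((1 + x)^k - 1)^2 + 2 x^k` of `K_{k,k}`: a vertex set dominates `K_{k,k}`
iff it meets both sides or is a whole side. -/
def completeBipartiteDomPoly (k : ℕ) (x : ℝ) : ℝ :=
  (1 + x) ^ (2 * k) - 2 * (1 + x) ^ k + 2 * x ^ k + 1

namespace completeBipartiteDomPoly

theorem continuous (k : ℕ) : Continuous (completeBipartiteDomPoly k) := by
  unfold completeBipartiteDomPoly
  fun_prop

theorem apply_neg_one {k : ℕ} (hk : Odd k) : completeBipartiteDomPoly k (-1) = -1 := by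
  have hk0 : k ≠ 0 := hk.pos.ne'
  simp [completeBipartiteDomPoly, zero_pow hk0, zero_pow (mul_ne_zero two_ne_zero hk0),
    hk.neg_one_pow]
  norm_num

theorem apply_neg_one_add_pos {k : ℕ} (hk : Odd k) {a : ℝ}
    (hsmall : 2 * a ^ k + 2 * (1 - a) ^ k < 1) : 0 < completeBipartiteDomPoly k (-1 + a) := by
  have hodd_pow : (-1 + a) ^ k = -(1 - a) ^ k := by
    rw [show -1 + a = -(1 - a) by ring, hk.neg_pow]
  have hsq : 0 ≤ a ^ (2 * k) := by
    rw [pow_mul']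
    positivity
  simp only [completeBipartiteDomPoly, add_neg_cancel_left, hodd_pow]
  linarith

theorem eventually_two_pow_add_two_one_sub_pow_lt_one {a : ℝ} (ha0 : 0 < a) (ha1 : a < 1) :
    ∀ᶠ k : ℕ in atTop, 2 * a ^ k + 2 * (1 - a) ^ k < 1 := by
  have hlim : Tendsto (fun k : ℕ => 2 * a ^ k + 2 * (1 - a) ^ k) atTop (nhds 0) := by
    simpa using
      ((tendsto_pow_atTop_nhds_zero_of_lt_one ha0.le ha1).const_mul 2).add
        ((tendsto_pow_atTop_nhds_zero_of_lt_one (by linarith) (by linarith)).const_mul 2)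
  exact hlim.eventually_lt_const one_pos

theorem exists_root_mem_Ioo {k : ℕ} (hk : Odd k) {a : ℝ} (ha : 0 < a)
    (hpos : 0 < completeBipartiteDomPoly k (-1 + a)) :
    ∃ x ∈ Ioo (-1) (-1 + a), completeBipartiteDomPoly k x = 0 := by
  have hsign : (0 : ℝ) ∈ Ioo (completeBipartiteDomPoly k (-1))
      (completeBipartiteDomPoly k (-1 + a)) := by
    rw [apply_neg_one hk]
    exact ⟨neg_one_lt_zero, hpos⟩
  exact intermediate_value_Ioo (by linarith) (continuous k).continuousOn hsign

end completeBipartiteDomPoly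

open completeBipartiteDomPoly

theorem Kkk_root_in_interval (δ : ℝ) (h0 : 0 < δ) (h1 : δ < 1) :
    ∃ N : ℕ, ∀ k ≥ N, Odd k →
      ∃ x : ℝ, -1 < x ∧ x < -1 + δ ∧
        (1 + x) ^ (2 * k) - 2 * (1 + x) ^ k + 2 * x ^ k + 1 = 0 := by
  obtain ⟨N, hN⟩ := eventually_atTop.mp
    (eventually_two_pow_add_two_one_sub_pow_lt_one (half_pos h0) (by linarith))
  refine ⟨N, fun k hkN hk => ?_⟩
  obtain ⟨x, ⟨hx_gt, hx_lt⟩, hx_root⟩ :=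
    exists_root_mem_Ioo hk (half_pos h0) (apply_neg_one_add_pos hk (hN k hkN))
  exact ⟨x, hx_gt, by linarith, hx_root⟩
end

section
/- Let r_k denote the unique root of g_k(R) = R(R-1)^k - R^k in (1, ∞). Then r_{k+1} > r_k for all k ≥ 2. -/
/-! Substituting `u = 1/R` turns the root equation `R (R-1)^k = R^k` into the fixed-point equation
`(1 - u)^k = u` on `(0, 1)`. If `v = 1/s` solved the exponent-`(k+1)` equation with `v ≥ u`, then
`v = (1 - v)^(k+1) < (1 - v)^k ≤ (1 - u)^k = u`, a contradiction; hence `1/s < 1/r`. -/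

theorem one_sub_inv_pow_eq_inv {n : ℕ} {r : ℝ} (hr : 0 < r) (h : r * (r - 1) ^ n - r ^ n = 0) :
    (1 - r⁻¹) ^ n = r⁻¹ := by
  have h_sub : 1 - r⁻¹ = (r - 1) / r := by field_simp
  rw [h_sub, div_pow, div_eq_iff (pow_pos hr n).ne', ← mul_right_inj' hr.ne']
  field_simp
  linear_combination h

theorem lt_of_one_sub_pow_eq_self {k : ℕ} {u v : ℝ} (hv₀ : 0 < v) (hv₁ : v < 1)
    (hu : (1 - u) ^ k = u) (hv : (1 - v) ^ (k + 1) = v) : v < u := by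
  by_contra! huv
  have h_succ : (1 - v) ^ (k + 1) < (1 - v) ^ k := by
    rw [pow_succ]
    exact mul_lt_of_lt_one_right (pow_pos (by linarith) k) (by linarith)
  have h_mono : (1 - v) ^ k ≤ (1 - u) ^ k := pow_le_pow_left₀ (by linarith) (by linarith) k
  linarith

theorem gk_roots_increasing_general (k : ℕ) (r s : ℝ)
    (hr : 1 < r ∧ r * (r - 1) ^ k - r ^ k = 0)
    (hs : 1 < s ∧ s * (s - 1) ^ (k + 1) - s ^ (k + 1) = 0) :
    r < s := by
  obtain ⟨hr₁, hr_root⟩ := hr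
  obtain ⟨hs₁, hs_root⟩ := hs
  have hr₀ : 0 < r := by linarith
  have hs₀ : 0 < s := by linarith
  have h_inv : s⁻¹ < r⁻¹ :=
    lt_of_one_sub_pow_eq_self (inv_pos.2 hs₀) (inv_lt_one_of_one_lt₀ hs₁)
      (one_sub_inv_pow_eq_inv hr₀ hr_root) (one_sub_inv_pow_eq_inv hs₀ hs_root)
  exact (inv_lt_inv₀ hs₀ hr₀).1 h_inv

theorem gk_roots_increasing (k : ℕ) (hk : 2 ≤ k) (r s : ℝ)
    (hr : 1 < r ∧ r * (r - 1) ^ k - r ^ k = 0)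
    (hs : 1 < s ∧ s * (s - 1) ^ (k + 1) - s ^ (k + 1) = 0) :
    r < s :=
  gk_roots_increasing_general k r s hr hs
end

section
/- The sequence r_k of unique roots of g_k(R) = R(R-1)^k - R^k in (1,∞) tends to infinity as k → ∞. -/
/-! Substituting `x = R⁻¹` turns `g_k(R) = 0` into `x = (1 - x)^k`, with `0 < x < 1`. Whenever
`x_k = r_k⁻¹ ≥ ε`, this gives `ε ≤ x_k ≤ (1 - ε)^k`, which fails for large `k`; hence
`r_k⁻¹ → 0⁺` and `r_k → ∞`. -/

open Filter Topology

lemma inv_eq_one_sub_inv_pow_of_root {R : ℝ} (hR : R ≠ 0) {k : ℕ}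
    (hroot : R * (R - 1) ^ k - R ^ k = 0) : R⁻¹ = (1 - R⁻¹) ^ k := by
  have hpow : R * (R - 1) ^ k = R ^ k := sub_eq_zero.mp hroot
  have hne : (R - 1) ^ k ≠ 0 := fun h0 => pow_ne_zero k hR (by rw [← hpow, h0, mul_zero])
  calc R⁻¹ = (R - 1) ^ k / (R * (R - 1) ^ k) := by field_simp
    _ = (1 - R⁻¹) ^ k := by rw [hpow, ← div_pow]; field_simp

lemma tendsto_nhds_zero_of_le_one_sub_pow {x : ℕ → ℝ}
    (hx : ∀ᶠ k in atTop, 0 ≤ x k ∧ x k ≤ 1 ∧ x k ≤ (1 - x k) ^ k) :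
    Tendsto x atTop (𝓝 0) := by
  refine tendsto_order.2 ⟨fun a ha => hx.mono fun k hk => ha.trans_le hk.1, fun ε hε => ?_⟩
  set δ := min ε 1
  have hδ : 0 < δ := lt_min hε one_pos
  have hsmall : ∀ᶠ k in atTop, (1 - δ) ^ k < δ :=
    (tendsto_pow_atTop_nhds_zero_of_lt_one (by linarith [min_le_right ε 1]) (by linarith))
      |>.eventually_lt_const hδ
  filter_upwards [hx, hsmall] with k ⟨_, hx1, hxk⟩ hk
  by_contra! hεx
  have hδx : δ ≤ x k := (min_le_left ε 1).trans hεx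
  have : (1 - x k) ^ k ≤ (1 - δ) ^ k := pow_le_pow_left₀ (by linarith) (by linarith) k
  linarith

theorem gk_roots_tendsto_atTop (r : ℕ → ℝ)
    (h : ∀ k ≥ 2, 1 < r k ∧ r k * (r k - 1) ^ k - (r k) ^ k = 0) :
    Filter.Tendsto r Filter.atTop Filter.atTop := by
  have hroot : ∀ᶠ k in atTop, 1 < r k ∧ r k * (r k - 1) ^ k - r k ^ k = 0 :=
    eventually_atTop.2 ⟨2, h⟩
  have hinv : Tendsto (fun k => (r k)⁻¹) atTop (𝓝[>] 0) := by
    refine tendsto_nhdsWithin_iff.2 ⟨tendsto_nhds_zero_of_le_one_sub_pow ?_, ?_⟩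
    · filter_upwards [hroot] with k ⟨hr1, hrk⟩
      have hr0 : 0 < r k := zero_lt_one.trans hr1
      exact ⟨inv_nonneg.2 hr0.le, inv_le_one_of_one_le₀ hr1.le,
        (inv_eq_one_sub_inv_pow_of_root hr0.ne' hrk).le⟩
    · filter_upwards [hroot] with k hk
      exact inv_pos.2 (zero_lt_one.trans hk.1)
  exact (tendsto_inv_nhdsGT_zero.comp hinv).congr fun k => inv_inv (r k)
end

section
/- For the sequence r_k of unique roots of g_k(R) = R(R-1)^k - R^k in (1,∞), the differences r_{k+1} - r_k are eventually bounded above by 4. -/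
/-!
Taking logarithms, a root `R > 1` of `R (R - 1)^n = R^n` satisfies
`n (log R - log (R - 1)) = log R`, and `1/R ≤ log R - log (R - 1) ≤ 1/(R - 1)` turns this into
`(R - 1) log R ≤ n ≤ R log R`. For consecutive roots `r = r_k`, `s = r_{k+1}` with `s - 1 > r + 3`
this would give `k + 1 ≥ (s - 1) log s > (r + 3) log r ≥ k + 3 log r`, impossible since `r > 2`
and `3 log 2 > 1`.
-/

open Real

namespace GkRoot

variable {n : ℕ} {R : ℝ}

lemma inv_le_log_sub_log_sub_one (hR : 1 < R) : R⁻¹ ≤ log R - log (R - 1) := by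
  have h := one_sub_inv_le_log_of_pos (show 0 < R / (R - 1) by bound)
  rw [log_div (by linarith) (by linarith), inv_div] at h
  have : 1 - (R - 1) / R = R⁻¹ := by field_simp; ring
  linarith

lemma log_sub_log_sub_one_le_inv (hR : 1 < R) : log R - log (R - 1) ≤ (R - 1)⁻¹ := by
  have h := log_le_sub_one_of_pos (show 0 < R / (R - 1) by bound)
  rw [log_div (by linarith) (by linarith)] at h
  have : R / (R - 1) - 1 = (R - 1)⁻¹ := by
    field_simp [show R - 1 ≠ 0 by linarith]
    ring
  linarith

lemma natCast_mul_log_sub_log_sub_one (hR : 1 < R) (h : R * (R - 1) ^ n - R ^ n = 0) :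
    n * (log R - log (R - 1)) = log R := by
  have h_log := congrArg log (sub_eq_zero.mp h)
  rw [log_mul (by positivity) (pow_ne_zero _ (by linarith)), log_pow, log_pow] at h_log
  linarith

lemma natCast_le_mul_log (hR : 1 < R) (h : R * (R - 1) ^ n - R ^ n = 0) :
    (n : ℝ) ≤ R * log R := by
  have h_inv := mul_le_mul_of_nonneg_left (inv_le_log_sub_log_sub_one hR) n.cast_nonneg
  rw [natCast_mul_log_sub_log_sub_one hR h, ← div_eq_mul_inv, div_le_iff₀ (by linarith)] at h_inv
  linarith

lemma sub_one_mul_log_le_natCast (hR : 1 < R) (h : R * (R - 1) ^ n - R ^ n = 0) :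
    (R - 1) * log R ≤ n := by
  have h_inv := mul_le_mul_of_nonneg_left (log_sub_log_sub_one_le_inv hR) n.cast_nonneg
  rw [natCast_mul_log_sub_log_sub_one hR h, ← div_eq_mul_inv, le_div_iff₀ (by linarith)] at h_inv
  linarith

/-- The root equation says `n log (R - 1) = (n - 1) log R`, which is positive. -/
lemma two_lt_of_root (hn : 2 ≤ n) (hR : 1 < R) (h : R * (R - 1) ^ n - R ^ n = 0) : 2 < R := by
  have h_log := natCast_mul_log_sub_log_sub_one hR h
  have hn' : (2 : ℝ) ≤ n := by exact_mod_cast hn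
  have h_pos : 0 < log (R - 1) := by nlinarith [log_pos hR]
  linarith [(log_pos_iff (by linarith)).mp h_pos]

end GkRoot

open GkRoot in
theorem gk_root_gaps_bounded :
    ∃ N : ℕ, ∀ k ≥ N, 2 ≤ k → ∀ r s : ℝ,
      (1 < r ∧ r * (r - 1) ^ k - r ^ k = 0) →
      (1 < s ∧ s * (s - 1) ^ (k + 1) - s ^ (k + 1) = 0) →
      s - r ≤ 4 := by
  refine ⟨2, fun k _ hk r s ⟨hr, hr_root⟩ ⟨hs, hs_root⟩ => ?_⟩
  have hr_lower : (k : ℝ) ≤ r * log r := natCast_le_mul_log hr hr_root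
  have hs_upper : (s - 1) * log s ≤ k + 1 := by
    exact_mod_cast sub_one_mul_log_le_natCast hs hs_root
  have h_log_r : 1 / 3 < log r :=
    calc (1 / 3 : ℝ) < log 2 := by linarith [log_two_gt_d9]
      _ < log r := log_lt_log two_pos (two_lt_of_root hk hr hr_root)
  by_contra! h_gap
  have h_mono : (r + 3) * log r < (s - 1) * log s :=
    mul_lt_mul'' (by linarith) (log_lt_log (by linarith) (by linarith)) (by linarith) (by linarith)
  linarith
end
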